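/- arXiv:1609.08899 — 2 statements merged into one kernel-verified Lean document; each statement's English description precedes it below -/
import Mathlib

section
/- Suppose ν ≥ (1/(4(1−μ)))·max{ min{ ‖u²‖₂²/‖u‖₂⁴ , ‖h‖₂²/μ² } , min{ ‖u‖₂²/‖u‖₁² , ‖h‖₂²/μ² } }. Then 𝔏̃'(ν,μ,u,h) ≤ 𝔏̃(ν,μ,u). (This is Proposition 5.3(ii), comparing the two Gaussian bounds for the approximated first chaos of a stationary linear Hawkes process.) -/
open MeasureTheory Real Filter
open scoped ENNReal

/-- The `L^p` norm (with respect to Lebesgue measure on `ℝ`) as a real number. -/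
noncomputable def lpNorm (p : ℝ≥0∞) (f : ℝ → ℝ) : ℝ :=
  (eLpNorm f p volume).toReal

/-- The Gaussian bound `𝔏(ν,μ,u)` of Theorem 5.1. -/
noncomputable def Lbound (ν μ : ℝ) (u : ℝ → ℝ) : ℝ :=
  Real.sqrt (2 / π) * |1 - ν / (1 - μ) * lpNorm 2 u ^ 2|
    + ν / (1 - μ) * lpNorm 3 u ^ 3
    + 2 * Real.sqrt (2 / π) * ν * μ * (2 - μ) / (1 - μ) ^ 2 * lpNorm 2 u ^ 2
    + ν * μ / (1 - μ) ^ 2 * lpNorm 2 u * lpNorm 2 (fun t => u t ^ 2)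

/-- The spectral-theory Gaussian bound `𝔏'(ν,μ,u,h)` of Theorem 5.2. -/
noncomputable def Lbound' (ν μ : ℝ) (u h : ℝ → ℝ) : ℝ :=
  Real.sqrt (2 / π) *
      Real.sqrt ((1 - ν / (1 - μ) * lpNorm 2 u ^ 2) ^ 2
        + ν / (1 - μ) ^ 3 *
            min (μ ^ 2 * lpNorm 2 (fun t => u t ^ 2) ^ 2)
              (lpNorm 2 h ^ 2 * lpNorm 1 (fun t => u t ^ 2) ^ 2))
    + ν / (1 - μ) * lpNorm 3 u ^ 3
    + 2 * Real.sqrt (2 / π) * ν * μ / (1 - μ) ^ 2 * lpNorm 2 u ^ 2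
    + ν * μ / (1 - μ) ^ 2 * lpNorm 2 u * lpNorm 2 (fun t => u t ^ 2)

/-- The bound `𝔏̃(ν,μ,u)` for the approximated first chaos (Theorem 5.1). -/
noncomputable def LboundTilde (ν μ : ℝ) (u : ℝ → ℝ) : ℝ :=
  Lbound ν μ u + 2 * ν * μ / (1 - μ) * lpNorm 1 u

/-- The bound `𝔏̃'(ν,μ,u,h)` for the approximated first chaos (Theorem 5.2). -/
noncomputable def LboundTilde' (ν μ : ℝ) (u h : ℝ → ℝ) : ℝ :=
  Lbound' ν μ u h
    + Real.sqrt ν / (1 - μ) ^ ((3 : ℝ) / 2) *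
        min (μ * lpNorm 2 u) (lpNorm 2 h * lpNorm 1 u)

/-!
Both inequalities are elementary once the minima are factored, e.g.
`min (μ²‖u²‖₂²) (‖h‖₂²‖u‖₂⁴) = μ²‖u‖₂⁴ · min (‖u²‖₂²/‖u‖₂⁴) (‖h‖₂²/μ²)`. For `𝔏' ≤ 𝔏`, the bound
`√(X² + Y) ≤ |X| + √Y` costs at most `2νμ‖u‖₂²/(1-μ)`, which the first half of the hypothesis
guarantees and which the factor `2 - μ = 1 + (1 - μ)` in `𝔏` pays for. The extra terms of `𝔏̃'`
and `𝔏̃` compare after squaring, by the second half of the hypothesis.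
-/

lemma lpNorm_one_sq (u : ℝ → ℝ) : lpNorm 1 (fun t => u t ^ 2) = lpNorm 2 u ^ 2 := by
  have hfun : (fun t => u t ^ 2) = fun t => ‖u t‖ ^ (2 : ℝ) := by
    funext t
    rw [Real.rpow_two, Real.norm_eq_abs, sq_abs]
  have h : eLpNorm (fun t => u t ^ 2) 1 volume = eLpNorm u 2 volume ^ (2 : ℝ) := by
    rw [hfun, eLpNorm_norm_rpow u two_pos]
    norm_num
  rw [_root_.lpNorm, h, ← ENNReal.toReal_rpow, Real.rpow_two, _root_.lpNorm]

lemma min_mul_le_mul_of_min_div_le {P Q s t K : ℝ} (hP : 0 ≤ P) (hQ : 0 ≤ Q) (hs : 0 ≤ s)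
    (ht : 0 ≤ t) (h : min (s / Q) (t / P) ≤ K) : min (P * s) (t * Q) ≤ P * Q * K := by
  rcases hP.eq_or_lt with rfl | hP
  · simp [mul_nonneg ht hQ]
  rcases hQ.eq_or_lt with rfl | hQ
  · simp [mul_nonneg hP.le hs]
  calc min (P * s) (t * Q) = P * Q * min (s / Q) (t / P) := by
        rw [mul_min_of_nonneg _ _ (by positivity)]
        congr 1 <;> field_simp
    _ ≤ P * Q * K := by gcongr

lemma sqrt_sq_add_le_abs_add {x y d : ℝ} (hd : 0 ≤ d) (hy : y ≤ d ^ 2) :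
    √(x ^ 2 + y) ≤ |x| + d :=
  Real.sqrt_le_iff.mpr ⟨by positivity, by nlinarith [sq_abs x, abs_nonneg x]⟩

lemma Lbound'_le_Lbound {ν μ : ℝ} (hν : 0 ≤ ν) (hμ0 : 0 ≤ μ) (hμ1 : μ < 1) (u h : ℝ → ℝ)
    (hcond : min (lpNorm 2 (fun t => u t ^ 2) ^ 2 / lpNorm 2 u ^ 4) (lpNorm 2 h ^ 2 / μ ^ 2)
      ≤ 4 * (1 - μ) * ν) :
    Lbound' ν μ u h ≤ Lbound ν μ u := by
  have hκ : 0 < 1 - μ := by linarith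
  rw [Lbound', Lbound, lpNorm_one_sq, ← pow_mul]
  set a := lpNorm 2 u
  set b := lpNorm 2 (fun t => u t ^ 2)
  set H := lpNorm 2 h
  have hmin : min (μ ^ 2 * b ^ 2) (H ^ 2 * a ^ (2 * 2)) ≤ μ ^ 2 * a ^ 4 * (4 * (1 - μ) * ν) :=
    min_mul_le_mul_of_min_div_le (sq_nonneg μ) (by positivity : (0 : ℝ) ≤ a ^ 4) (sq_nonneg b)
      (sq_nonneg H) hcond
  have hY : ν / (1 - μ) ^ 3 * min (μ ^ 2 * b ^ 2) (H ^ 2 * a ^ (2 * 2))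
      ≤ (2 * ν * μ / (1 - μ) * a ^ 2) ^ 2 :=
    calc _ ≤ ν / (1 - μ) ^ 3 * (μ ^ 2 * a ^ 4 * (4 * (1 - μ) * ν)) := by gcongr
      _ = _ := by field_simp; ring
  have hsqrt := sqrt_sq_add_le_abs_add (x := 1 - ν / (1 - μ) * a ^ 2)
    (mul_nonneg (div_nonneg (by positivity) hκ.le) (sq_nonneg a)) hY
  have hsplit : 2 * √(2 / π) * ν * μ * (2 - μ) / (1 - μ) ^ 2 * a ^ 2
      = 2 * √(2 / π) * ν * μ / (1 - μ) ^ 2 * a ^ 2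
        + √(2 / π) * (2 * ν * μ / (1 - μ) * a ^ 2) := by
    field_simp; ring
  have := mul_le_mul_of_nonneg_left hsqrt (Real.sqrt_nonneg (2 / π))
  linarith

lemma sqrt_div_rpow_mul_min_le {ν μ a c H : ℝ} (hν : 0 ≤ ν) (hμ0 : 0 ≤ μ) (hμ1 : μ < 1)
    (ha : 0 ≤ a) (hc : 0 ≤ c) (hH : 0 ≤ H)
    (hcond : min (a ^ 2 / c ^ 2) (H ^ 2 / μ ^ 2) ≤ 4 * (1 - μ) * ν) :
    √ν / (1 - μ) ^ ((3 : ℝ) / 2) * min (μ * a) (H * c) ≤ 2 * ν * μ / (1 - μ) * c := by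
  have hκ : 0 < 1 - μ := by linarith
  have hκ32 : ((1 - μ) ^ ((3 : ℝ) / 2)) ^ 2 = (1 - μ) ^ 3 := by
    rw [← Real.rpow_natCast, ← Real.rpow_mul hκ.le]
    norm_num
  have hmin_nonneg : 0 ≤ min (μ * a) (H * c) := le_min (by positivity) (by positivity)
  have hmin : min (μ * a) (H * c) ^ 2 ≤ μ ^ 2 * c ^ 2 * (4 * (1 - μ) * ν) :=
    calc min (μ * a) (H * c) ^ 2 ≤ min (μ ^ 2 * a ^ 2) (H ^ 2 * c ^ 2) := by
          rw [← mul_pow, ← mul_pow]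
          exact le_min (pow_le_pow_left₀ hmin_nonneg (min_le_left _ _) 2)
            (pow_le_pow_left₀ hmin_nonneg (min_le_right _ _) 2)
      _ ≤ _ := min_mul_le_mul_of_min_div_le (by positivity) (by positivity) (by positivity)
          (by positivity) hcond
  rw [← pow_le_pow_iff_left₀ (by positivity) (by positivity) two_ne_zero, mul_pow, div_pow,
    Real.sq_sqrt hν, hκ32]
  calc ν / (1 - μ) ^ 3 * min (μ * a) (H * c) ^ 2
      ≤ ν / (1 - μ) ^ 3 * (μ ^ 2 * c ^ 2 * (4 * (1 - μ) * ν)) := by gcongr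
    _ = (2 * ν * μ / (1 - μ) * c) ^ 2 := by field_simp; ring

theorem prop_5_3_ii_general (ν μ : ℝ) (u h : ℝ → ℝ)
    (hν : 0 < ν) (hμ : μ ∈ Set.Ioo (0 : ℝ) 1)
    (hcond : ν ≥ 1 / (4 * (1 - μ)) *
      max
        (min (lpNorm 2 (fun t => u t ^ 2) ^ 2 / lpNorm 2 u ^ 4)
          (lpNorm 2 h ^ 2 / μ ^ 2))
        (min (lpNorm 2 u ^ 2 / lpNorm 1 u ^ 2)
          (lpNorm 2 h ^ 2 / μ ^ 2))) :
    LboundTilde' ν μ u h ≤ LboundTilde ν μ u := by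
  obtain ⟨hμ0, hμ1⟩ := hμ
  rw [ge_iff_le, one_div, inv_mul_le_iff₀ (by linarith)] at hcond
  obtain ⟨hcond₁, hcond₂⟩ := max_le_iff.mp hcond
  exact add_le_add (Lbound'_le_Lbound hν.le hμ0.le hμ1 u h hcond₁)
    (sqrt_div_rpow_mul_min_le hν.le hμ0.le hμ1 ENNReal.toReal_nonneg ENNReal.toReal_nonneg
      ENNReal.toReal_nonneg hcond₂)

/-- Proposition 5.3(ii): if
`ν ≥ (1/(4(1−μ)))·max{min{‖u²‖₂²/‖u‖₂⁴, ‖h‖₂²/μ²}, min{‖u‖₂²/‖u‖₁², ‖h‖₂²/μ²}}`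
then `𝔏̃'(ν,μ,u,h) ≤ 𝔏̃(ν,μ,u)`. -/
theorem prop_5_3_ii (ν μ : ℝ) (u h : ℝ → ℝ)
    (hν : 0 < ν) (hμ : μ ∈ Set.Ioo (0 : ℝ) 1)
    (hu1 : MemLp u 1 volume) (hu2 : MemLp u 2 volume)
    (hu3 : MemLp u 3 volume) (hu4 : MemLp u 4 volume)
    (hu0 : ¬ u =ᵐ[volume] 0)
    (hhm : Measurable h) (hh0 : ∀ x, 0 ≤ h x) (hhneg : ∀ x ≤ 0, h x = 0)
    (hh1 : Integrable h volume) (hh2 : MemLp h 2 volume)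
    (hhμ : ∫ x, h x = μ)
    (hcond : ν ≥ 1 / (4 * (1 - μ)) *
      max
        (min (lpNorm 2 (fun t => u t ^ 2) ^ 2 / lpNorm 2 u ^ 4)
          (lpNorm 2 h ^ 2 / μ ^ 2))
        (min (lpNorm 2 u ^ 2 / lpNorm 1 u ^ 2)
          (lpNorm 2 h ^ 2 / μ ^ 2))) :
    LboundTilde' ν μ u h ≤ LboundTilde ν μ u :=
  prop_5_3_ii_general ν μ u h hν hμ hcond
end

section
/- Let t ∈ ℝ and s > t. Let r : ℝ → [0,∞) be measurable, integrable, vanishing on (−∞,0], with ρ := ∫_ℝ r(x) dx. Let q : ℝ → [0,∞) be measurable, vanishing on (−∞,t], and bounded on [t,s] by a constant C. Then for every n ≥ 1, (q ∗ r^{∗n})(s) ≤ C·ρⁿ; in particular, if ρ < 1 then (q ∗ r^{∗n})(s) → 0 as n → ∞. -/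
open MeasureTheory Real Filter Topology
open scoped ENNReal

/-- Convolution of `[0,∞]`-valued functions on `ℝ` (Lebesgue measure), defined
pointwise: `(f ∗ g)(s) = ∫ f(s−u) g(u) du`. -/
noncomputable def econv (f g : ℝ → ℝ≥0∞) : ℝ → ℝ≥0∞ :=
  fun s => ∫⁻ u, f (s - u) * g u

/-- `convIter r p i = r^{∗i} ∗ p`, with `convIter r p 0 = p`. In particular
`convIter r r n = r^{∗(n+1)}` is the `(n+1)`-fold convolution power of `r`. -/
noncomputable def convIter (r p : ℝ → ℝ≥0∞) : ℕ → ℝ → ℝ≥0∞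
  | 0 => p
  | n + 1 => econv r (convIter r p n)

/-! Since `∫ (f ∗ g) = (∫ f)(∫ g)` (Tonelli and translation invariance), `r^{∗n}` has total mass
`ρⁿ`; since `r^{∗n}` is supported on `(0, ∞)`, the integral `∫ q(s - u) r^{∗n}(u) du` only sees
`q` on `(-∞, s)`, where `q ≤ C`. Hence `(q ∗ r^{∗n})(s) ≤ C ρⁿ`. -/

section Convolution

variable {f g : ℝ → ℝ≥0∞}

theorem Measurable.econv (hf : Measurable f) (hg : Measurable g) : Measurable (econv f g) := by
  unfold _root_.econv
  fun_prop

theorem lintegral_econv (hf : Measurable f) (hg : Measurable g) :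
    ∫⁻ x, econv f g x = (∫⁻ x, f x) * ∫⁻ x, g x := by
  have hprod : Measurable fun p : ℝ × ℝ => f (p.1 - p.2) * g p.2 := by fun_prop
  calc ∫⁻ x, ∫⁻ u, f (x - u) * g u = ∫⁻ u, ∫⁻ x, f (x - u) * g u :=
        lintegral_lintegral_swap hprod.aemeasurable
    _ = ∫⁻ u, (∫⁻ x, f x) * g u := by
        refine lintegral_congr fun u => ?_
        rw [lintegral_mul_const _ (by fun_prop), lintegral_sub_right_eq_self f u]
    _ = (∫⁻ x, f x) * ∫⁻ x, g x := lintegral_const_mul _ hg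

theorem econv_eq_zero_of_nonpos (hf : ∀ x ≤ 0, f x = 0) (hg : ∀ x ≤ 0, g x = 0) :
    ∀ x ≤ 0, econv f g x = 0 := by
  intro x hx
  refine lintegral_eq_zero_of_ae_eq_zero (ae_of_all _ fun u => ?_)
  rcases le_or_gt u 0 with hu | hu
  · simp [hg u hu]
  · simp [hf (x - u) (by linarith)]

theorem econv_apply_le_mul_lintegral {s : ℝ} {c : ℝ≥0∞} (hg : Measurable g)
    (hg0 : ∀ x ≤ 0, g x = 0) (hfc : ∀ x < s, f x ≤ c) :
    econv f g s ≤ c * ∫⁻ x, g x := by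
  rw [← lintegral_const_mul c hg]
  refine lintegral_mono fun u => ?_
  rcases le_or_gt u 0 with hu | hu
  · simp [hg0 u hu]
  · exact mul_le_mul_left (hfc (s - u) (by linarith)) (g u)

end Convolution

section ConvolutionPowers

variable {r p : ℝ → ℝ≥0∞}

theorem Measurable.convIter (hr : Measurable r) (hp : Measurable p) (n : ℕ) :
    Measurable (convIter r p n) := by
  induction n with
  | zero => exact hp
  | succ n ih => exact hr.econv ih

theorem convIter_eq_zero_of_nonpos (hr : ∀ x ≤ 0, r x = 0) (hp : ∀ x ≤ 0, p x = 0) (n : ℕ) :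
    ∀ x ≤ 0, convIter r p n x = 0 := by
  induction n with
  | zero => exact hp
  | succ n ih => exact econv_eq_zero_of_nonpos hr ih

theorem lintegral_convIter (hr : Measurable r) (hp : Measurable p) (n : ℕ) :
    ∫⁻ x, convIter r p n x = (∫⁻ x, r x) ^ n * ∫⁻ x, p x := by
  induction n with
  | zero => simp [convIter]
  | succ n ih =>
    rw [convIter, lintegral_econv hr (hr.convIter hp n), ih, pow_succ', mul_assoc]

end ConvolutionPowers

theorem remainder_vanishes_general (t s : ℝ) (r q : ℝ → ℝ) (C : ℝ)
    (hrm : Measurable r) (hr0 : ∀ x, 0 ≤ r x) (hrneg : ∀ x ≤ (0 : ℝ), r x = 0)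
    (hrint : Integrable r volume)
    (hqt : ∀ x ≤ t, q x = 0)
    (hqC : ∀ x ∈ Set.Icc t s, q x ≤ C) :
    (∀ n : ℕ,
      econv (fun x => ENNReal.ofReal (q x))
          (convIter (fun x => ENNReal.ofReal (r x)) (fun x => ENNReal.ofReal (r x)) n) s
        ≤ ENNReal.ofReal C * ENNReal.ofReal (∫ x, r x) ^ (n + 1)) ∧
    ((∫ x, r x) < 1 →
      Tendsto
        (fun n : ℕ =>
          econv (fun x => ENNReal.ofReal (q x))
            (convIter (fun x => ENNReal.ofReal (r x)) (fun x => ENNReal.ofReal (r x)) n) s)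
        atTop (𝓝 0)) := by
  set R : ℝ → ℝ≥0∞ := fun x => ENNReal.ofReal (r x)
  set ρ : ℝ≥0∞ := ENNReal.ofReal (∫ x, r x)
  have hRm : Measurable R := ENNReal.measurable_ofReal.comp hrm
  have hR0 : ∀ x ≤ 0, R x = 0 := fun x hx => by simp [R, hrneg x hx]
  have hRmass : ∫⁻ x, R x = ρ :=
    (ofReal_integral_eq_lintegral_ofReal hrint (ae_of_all _ hr0)).symm
  have hQC : ∀ x < s, ENNReal.ofReal (q x) ≤ ENNReal.ofReal C := fun x hx => by
    rcases le_or_gt x t with hxt | hxt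
    · simp [hqt x hxt]
    · exact ENNReal.ofReal_le_ofReal (hqC x ⟨hxt.le, hx.le⟩)
  have bound : ∀ n : ℕ, econv (fun x => ENNReal.ofReal (q x)) (convIter R R n) s
      ≤ ENNReal.ofReal C * ρ ^ (n + 1) := fun n => by
    calc _ ≤ ENNReal.ofReal C * ∫⁻ x, convIter R R n x :=
          econv_apply_le_mul_lintegral (hRm.convIter hRm n)
            (convIter_eq_zero_of_nonpos hR0 hR0 n) hQC
      _ = ENNReal.ofReal C * ρ ^ (n + 1) := by
          rw [lintegral_convIter hRm hRm, hRmass, ← pow_succ]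
  refine ⟨bound, fun hρ => ?_⟩
  have hρ1 : ρ < 1 := by simpa [ρ] using hρ
  have hlim : Tendsto (fun n : ℕ => ENNReal.ofReal C * ρ ^ (n + 1)) atTop (𝓝 0) := by
    simpa using ENNReal.Tendsto.const_mul
      ((ENNReal.tendsto_pow_atTop_nhds_zero_of_lt_one hρ1).comp (tendsto_add_atTop_nat 1))
      (Or.inr ENNReal.ofReal_ne_top)
  exact tendsto_of_tendsto_of_tendsto_of_le_of_le tendsto_const_nhds hlim (fun _ => zero_le) bound

/-- The vanishing-remainder estimate used in the proof of Theorem 4.1: if `r ≥ 0` is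
measurable, integrable, supported on `(0,∞)` with `ρ = ∫ r`, and `q ≥ 0` is measurable,
vanishes on `(−∞,t]` and is bounded by `C` on `[t,s]` (for `s > t`), then for every
`n ≥ 1` one has `(q ∗ r^{∗n})(s) ≤ C ρⁿ`; in particular, `(q ∗ r^{∗n})(s) → 0` as
`n → ∞` when `ρ < 1`. Here `r^{∗n}` for `n ≥ 1` is encoded as `convIter R R (n-1)`. -/
theorem remainder_vanishes (t s : ℝ) (hts : t < s) (r q : ℝ → ℝ) (C : ℝ)
    (hrm : Measurable r) (hr0 : ∀ x, 0 ≤ r x) (hrneg : ∀ x ≤ (0 : ℝ), r x = 0)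
    (hrint : Integrable r volume)
    (hqm : Measurable q) (hq0 : ∀ x, 0 ≤ q x) (hqt : ∀ x ≤ t, q x = 0)
    (hqC : ∀ x ∈ Set.Icc t s, q x ≤ C) :
    (∀ n : ℕ,
      econv (fun x => ENNReal.ofReal (q x))
          (convIter (fun x => ENNReal.ofReal (r x)) (fun x => ENNReal.ofReal (r x)) n) s
        ≤ ENNReal.ofReal C * ENNReal.ofReal (∫ x, r x) ^ (n + 1)) ∧
    ((∫ x, r x) < 1 →
      Tendsto
        (fun n : ℕ =>
          econv (fun x => ENNReal.ofReal (q x))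
            (convIter (fun x => ENNReal.ofReal (r x)) (fun x => ENNReal.ofReal (r x)) n) s)
        atTop (𝓝 0)) :=
  remainder_vanishes_general t s r q C hrm hr0 hrneg hrint hqt hqC
end
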